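/- Let p be a univariate real polynomial of degree at most d, let R > r' > 0, and suppose |p(c_i)| ≤ η for all scaled Chebyshev nodes c_i = (r'/R)·cos(π(i+1/2)/(d+1)), i ∈ {0,...,d}. Then |p(1)| ≤ √2 · η · (d+1)² · (2R/r')^d. -/

import Mathlib

/-- Key telescoping trig sum. -/
lemma sumD (n m : ℕ) (hn : 0 < n) (hm : 0 < m) (hm2 : m < 2 * n) :
    ∑ i ∈ Finset.range n, Real.cos (Real.pi * m * i / n) = if Odd m then 1 else 0 := by
  have hn' : (0:ℝ) < n := by exact_mod_cast hn
  have hm' : (0:ℝ) < m := by exact_mod_cast hm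
  set t := Real.pi * m / (2 * n) with ht
  have htpos : 0 < t := by positivity
  have htlt : t < Real.pi := by
    rw [ht, div_lt_iff₀ (by positivity)]
    have : (m:ℝ) < 2 * n := by exact_mod_cast hm2
    nlinarith [Real.pi_pos]
  have hsin : 0 < Real.sin t := Real.sin_pos_of_pos_of_lt_pi htpos htlt
  have key : ∀ i : ℕ, Real.sin ((2*((i:ℝ)+1)-1)*t) - Real.sin ((2*(i:ℝ)-1)*t)
      = 2 * Real.sin t * Real.cos (Real.pi * m * i / n) := by
    intro i
    rw [Real.sin_sub_sin]
    have h1 : ((2*((i:ℝ)+1)-1)*t - (2*(i:ℝ)-1)*t) / 2 = t := by ring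
    have h2 : ((2*((i:ℝ)+1)-1)*t + (2*(i:ℝ)-1)*t) / 2 = Real.pi * m * i / n := by
      rw [ht]; field_simp; ring
    rw [h1, h2]
  have tele := Finset.sum_range_sub (fun i : ℕ => Real.sin ((2*(i:ℝ)-1)*t)) n
  push_cast at tele
  have lhs : ∑ i ∈ Finset.range n, (2 * Real.sin t * Real.cos (Real.pi * m * i / n))
      = Real.sin ((2*(n:ℝ)-1)*t) - Real.sin ((2*(0:ℝ)-1)*t) := by
    rw [← tele]
    exact Finset.sum_congr rfl fun i _ => (key i).symm
  rw [← Finset.mul_sum] at lhs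
  have e1 : (2*(n:ℝ)-1)*t = m * Real.pi - t := by
    rw [ht]; field_simp
  have e2 : (2*(0:ℝ)-1)*t = -t := by ring
  rw [e1, e2, Real.sin_neg] at lhs
  have e3 : Real.sin ((m:ℝ) * Real.pi - t) = -((-1)^m * Real.sin t) := by
    have := Real.sin_int_mul_pi_sub t (m : ℤ)
    push_cast at this
    convert this using 3
    exact (zpow_natCast _ _).symm
  rw [e3] at lhs
  rcases Nat.even_or_odd m with he | ho
  · rw [if_neg (by simpa [Nat.not_odd_iff_even] using he)]
    have : (-1:ℝ)^m = 1 := Even.neg_one_pow he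
    rw [this] at lhs
    have : (2 : ℝ) * Real.sin t * ∑ i ∈ Finset.range n, Real.cos (Real.pi * m * i / n) = 0 := by
      rw [lhs]; ring
    have h2 : (2 : ℝ) * Real.sin t ≠ 0 := by positivity
    exact (mul_eq_zero.mp this).resolve_left h2
  · rw [if_pos ho]
    have : (-1:ℝ)^m = -1 := Odd.neg_one_pow ho
    rw [this] at lhs
    have h2 : (2 : ℝ) * Real.sin t ≠ 0 := by positivity
    field_simp at lhs ⊢
    nlinarith [lhs]

lemma sumD'aux (n a b : ℕ) (hn : 0 < n) (h : b < a) (ha : a < n) :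
    ∑ i ∈ Finset.range n, Real.cos (Real.pi * ((a:ℝ) - b) * i / n)
      = if Odd (a+b) then 1 else 0 := by
  rw [show ((a:ℝ) - b) = ((a - b : ℕ) : ℝ) from by rw [Nat.cast_sub h.le]]
  rw [sumD n (a-b) hn (by omega) (by omega)]
  have hiff : Odd (a-b) ↔ Odd (a+b) := by simp only [Nat.odd_iff]; omega
  simp only [hiff]

lemma sumD' (n : ℕ) (hn : 0 < n) (a b : ℕ) (hab : a ≠ b) (ha : a < n) (hb : b < n) :
    ∑ i ∈ Finset.range n, Real.cos (Real.pi * ((a:ℝ) - b) * i / n)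
      = if Odd (a+b) then 1 else 0 := by
  rcases Nat.lt_or_ge a b with hlt | hge
  · have harg : ∀ i : ℕ, Real.pi * ((a:ℝ) - b) * i / n = -(Real.pi * ((b:ℝ) - a) * i / n) := by
      intro i; ring
    simp only [harg, Real.cos_neg]
    rw [sumD'aux n b a hn hlt hb, Nat.add_comm]
  · exact sumD'aux n a b hn (by omega) ha

lemma orth (d j l : ℕ) (hj : j ≤ d) (hl : l ≤ d) :
    1 + 2 * ∑ i ∈ Finset.range d,
        Real.cos (((i:ℝ)+1) * (Real.pi * ((j:ℝ) + 1/2) / ((d:ℝ)+1)))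
      * Real.cos (((i:ℝ)+1) * (Real.pi * ((l:ℝ) + 1/2) / ((d:ℝ)+1)))
      = if j = l then ((d:ℝ)+1) else 0 := by
  have hN : (0:ℝ) < (d:ℝ) + 1 := by positivity
  set g₁ : ℕ → ℝ := fun i => Real.cos (Real.pi * ((j:ℝ) - (l:ℝ)) * (i:ℝ) / ((d:ℝ)+1)) with hg₁
  set g₂ : ℕ → ℝ := fun i =>
    Real.cos (Real.pi * ((j:ℝ) + (l:ℝ) + 1) * (i:ℝ) / ((d:ℝ)+1)) with hg₂
  have key : ∀ i ∈ Finset.range d,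
      Real.cos (((i:ℝ)+1) * (Real.pi * ((j:ℝ) + 1/2) / ((d:ℝ)+1)))
      * Real.cos (((i:ℝ)+1) * (Real.pi * ((l:ℝ) + 1/2) / ((d:ℝ)+1)))
      = (g₁ (i+1) + g₂ (i+1)) / 2 := by
    intro i _
    have h2 := Real.two_mul_cos_mul_cos
      (((i:ℝ)+1) * (Real.pi * ((j:ℝ) + 1/2) / ((d:ℝ)+1)))
      (((i:ℝ)+1) * (Real.pi * ((l:ℝ) + 1/2) / ((d:ℝ)+1)))
    have e1 : ((i:ℝ)+1) * (Real.pi * ((j:ℝ) + 1/2) / ((d:ℝ)+1))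
        - ((i:ℝ)+1) * (Real.pi * ((l:ℝ) + 1/2) / ((d:ℝ)+1))
        = Real.pi * ((j:ℝ) - (l:ℝ)) * (((i:ℕ)+1 : ℕ):ℝ) / ((d:ℝ)+1) := by
      push_cast; field_simp; ring
    have e2 : ((i:ℝ)+1) * (Real.pi * ((j:ℝ) + 1/2) / ((d:ℝ)+1))
        + ((i:ℝ)+1) * (Real.pi * ((l:ℝ) + 1/2) / ((d:ℝ)+1))
        = Real.pi * ((j:ℝ) + (l:ℝ) + 1) * (((i:ℕ)+1 : ℕ):ℝ) / ((d:ℝ)+1) := by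
      push_cast; field_simp; ring
    rw [e1, e2] at h2
    simp only [hg₁, hg₂]
    linarith [h2]
  rw [Finset.sum_congr rfl key]
  have split : ∑ x ∈ Finset.range d, (g₁ (x+1) + g₂ (x+1))/2
      = ((∑ x ∈ Finset.range d, g₁ (x+1)) + ∑ x ∈ Finset.range d, g₂ (x+1))/2 := by
    rw [← Finset.sum_add_distrib, ← Finset.sum_div]
  rw [split]
  -- sum of g₂
  have hg₂0 : g₂ 0 = 1 := by simp [hg₂]
  have D2 := sumD (d+1) (j+l+1) (by omega) (by omega) (by omega)
  push_cast at D2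
  have hmatch2 : ∑ i ∈ Finset.range (d+1), g₂ i = if Odd (j+l+1) then (1:ℝ) else 0 := by
    rw [← D2]
  have S2 : ∑ x ∈ Finset.range d, g₂ (x+1) = (if Odd (j+l+1) then (1:ℝ) else 0) - 1 := by
    have h := Finset.sum_range_succ' g₂ d
    rw [hmatch2] at h
    rw [hg₂0] at h
    linarith
  rw [S2]
  by_cases hjl : j = l
  · subst hjl
    have hg₁1 : ∀ i : ℕ, g₁ i = 1 := by
      intro i; simp [hg₁]
    simp only [hg₁1, Finset.sum_const, Finset.card_range, nsmul_eq_mul, mul_one]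
    have hodd : Odd (j+j+1) := ⟨j, by ring⟩
    rw [if_pos hodd]
    norm_num
    ring
  · rw [if_neg hjl]
    have D1 := sumD' (d+1) (by omega) j l hjl (by omega) (by omega)
    push_cast at D1
    have hmatch1 : ∑ i ∈ Finset.range (d+1), g₁ i = if Odd (j+l) then (1:ℝ) else 0 := by
      rw [← D1]
    have hg₁0 : g₁ 0 = 1 := by simp [hg₁]
    have S1 : ∑ x ∈ Finset.range d, g₁ (x+1) = (if Odd (j+l) then (1:ℝ) else 0) - 1 := by
      have h := Finset.sum_range_succ' g₁ d
      rw [hmatch1, hg₁0] at h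
      linarith
    rw [S1]
    rcases Nat.even_or_odd (j+l) with he | ho
    · rw [if_neg (Nat.not_odd_iff_even.mpr he), if_pos (Even.add_one he)]
      ring
    · rw [if_pos ho, if_neg (Nat.not_odd_iff_even.mpr (Odd.add_one ho))]
      ring
section ChebAux
open Polynomial Polynomial.Chebyshev Finset


lemma T_natdeg : ∀ i : ℕ, (Polynomial.Chebyshev.T ℝ (i:ℤ)).natDegree ≤ i := by
  intro i
  induction i using Nat.strong_induction_on with
  | _ i ih =>
    match i with
    | 0 => simp [Polynomial.Chebyshev.T_zero]
    | 1 => simp [Polynomial.Chebyshev.T_one, Polynomial.natDegree_X_le]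
    | (k+2) =>
      have h1 := ih (k+1) (by omega)
      have h0 := ih k (by omega)
      have hc : ((k+2 : ℕ) : ℤ) = (k : ℤ) + 2 := by push_cast; ring
      rw [hc, Polynomial.Chebyshev.T_add_two]
      refine le_trans (Polynomial.natDegree_sub_le _ _) ?_
      have hx : (2 * X * T ℝ ((k:ℤ)+1)).natDegree ≤ k + 2 := by
        refine le_trans (Polynomial.natDegree_mul_le) ?_
        have : ((2:ℝ[X]) * X).natDegree ≤ 1 := by
          refine le_trans (Polynomial.natDegree_mul_le) ?_
          simp [Polynomial.natDegree_X_le]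
        have h1' : (T ℝ ((k:ℤ)+1)).natDegree ≤ k+1 := by
          have := ih (k+1) (by omega)
          rwa [show ((k+1:ℕ):ℤ) = (k:ℤ)+1 by push_cast; ring] at this
        omega
      have h0' : (T ℝ (k:ℤ)).natDegree ≤ k := h0
      omega

lemma T_ge_one (y : ℝ) (hy : 1 ≤ y) :
    ∀ i : ℕ, 1 ≤ (Polynomial.Chebyshev.T ℝ (i:ℤ)).eval y ∧
      (Polynomial.Chebyshev.T ℝ (i:ℤ)).eval y ≤ (Polynomial.Chebyshev.T ℝ ((i:ℤ)+1)).eval y := by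
  intro i
  induction i with
  | zero => simp [Polynomial.Chebyshev.T_zero, Polynomial.Chebyshev.T_one]; linarith
  | succ k ihk =>
    obtain ⟨h1, h2⟩ := ihk
    have hc : ((k+1:ℕ):ℤ) = (k:ℤ)+1 := by push_cast; ring
    rw [hc]
    have hrec : (Polynomial.Chebyshev.T ℝ ((k:ℤ)+2)).eval y
        = 2 * y * (Polynomial.Chebyshev.T ℝ ((k:ℤ)+1)).eval y
          - (Polynomial.Chebyshev.T ℝ (k:ℤ)).eval y := by
      rw [Polynomial.Chebyshev.T_add_two]; simp
    constructor
    · linarith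
    · rw [show (k:ℤ)+1+1 = (k:ℤ)+2 by ring, hrec]
      nlinarith

lemma T_le_pow (y : ℝ) (hy : 1 ≤ y) :
    ∀ i : ℕ, (Polynomial.Chebyshev.T ℝ (i:ℤ)).eval y ≤ (2*y)^i := by
  have step : ∀ i : ℕ, (Polynomial.Chebyshev.T ℝ ((i:ℤ)+1)).eval y
      ≤ 2*y*(Polynomial.Chebyshev.T ℝ (i:ℤ)).eval y := by
    intro i
    match i with
    | 0 =>
      simp [Polynomial.Chebyshev.T_zero, Polynomial.Chebyshev.T_one]
      linarith
    | (k+1) =>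
      have hrec : (Polynomial.Chebyshev.T ℝ ((k:ℤ)+2)).eval y
          = 2 * y * (Polynomial.Chebyshev.T ℝ ((k:ℤ)+1)).eval y
            - (Polynomial.Chebyshev.T ℝ (k:ℤ)).eval y := by
        rw [Polynomial.Chebyshev.T_add_two]; simp
      have h0 := (T_ge_one y hy k).1
      have hc : ((k+1:ℕ):ℤ) = (k:ℤ)+1 := by push_cast; ring
      rw [hc, show (k:ℤ)+1+1 = (k:ℤ)+2 by ring, hrec]
      linarith
  intro i
  induction i with
  | zero => simp [Polynomial.Chebyshev.T_zero]
  | succ k ihk =>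
    have hs := step k
    have hc : ((k+1:ℕ):ℤ) = (k:ℤ)+1 := by push_cast; ring
    rw [hc, pow_succ]
    have hTnn : 0 ≤ (Polynomial.Chebyshev.T ℝ (k:ℤ)).eval y := by
      linarith [(T_ge_one y hy k).1]
    calc (Polynomial.Chebyshev.T ℝ ((k:ℤ)+1)).eval y
        ≤ 2*y*(Polynomial.Chebyshev.T ℝ (k:ℤ)).eval y := hs
      _ ≤ 2*y*(2*y)^k := by nlinarith
      _ = (2*y)^k * (2*y) := by ring

/-- Extrapolation error bound: if a polynomial of degree at most `d` is bounded by `η`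
at the Chebyshev nodes scaled by `r'/R`, then `|p(1)| ≤ √2·η·(d+1)²·(2R/r')^d`. -/
theorem stmt_14 (d : ℕ) (p : Polynomial ℝ) (hdeg : p.natDegree ≤ d) (R r' η : ℝ)
    (hr : 0 < r') (hR : r' < R)
    (h : ∀ i ≤ d,
      |p.eval ((r' / R) * Real.cos (Real.pi * ((i : ℝ) + 1 / 2) / ((d : ℝ) + 1)))| ≤ η) :
    |p.eval 1| ≤ Real.sqrt 2 * η * ((d : ℝ) + 1) ^ 2 * (2 * R / r') ^ d := by
  have hRpos : (0:ℝ) < R := lt_trans hr hR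
  have hr0 : r' ≠ 0 := ne_of_gt hr
  have hR0 : R ≠ 0 := ne_of_gt hRpos
  have hN : (0:ℝ) < (d:ℝ)+1 := by positivity
  set c : ℝ := r' / R with hc
  set y : ℝ := R / r' with hyy
  have hy1 : 1 < y := (one_lt_div hr).mpr hR
  have hy2 : 1 ≤ 2*y := by linarith
  set θ : ℕ → ℝ := fun j => Real.pi * ((j:ℝ) + 1/2) / ((d:ℝ)+1) with hθ
  set v : ℕ → ℝ := fun j => Real.cos (θ j) with hv
  set B : ℕ → ℝ[X] := fun j => Polynomial.C (p.eval (c * v j) / ((d:ℝ)+1)) *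
      (1 + 2 * ∑ i ∈ Finset.range d,
        Polynomial.C (Real.cos (((i:ℝ)+1) * θ j)) * Polynomial.Chebyshev.T ℝ ((i:ℤ)+1)) with hB
  set L : ℝ[X] := ∑ j ∈ Finset.range (d+1), B j with hL
  -- natDegree bounds
  have hdegL : L.natDegree ≤ d := by
    refine Polynomial.natDegree_sum_le_of_forall_le _ _ (fun j _ => ?_)
    refine le_trans (Polynomial.natDegree_mul_le) ?_
    rw [Polynomial.natDegree_C]
    have hinner : (1 + 2 * ∑ i ∈ Finset.range d,
        Polynomial.C (Real.cos (((i:ℝ)+1) * θ j)) * Polynomial.Chebyshev.T ℝ ((i:ℤ)+1)).natDegree ≤ d := by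
      refine le_trans (Polynomial.natDegree_add_le _ _) ?_
      simp only [Polynomial.natDegree_one]
      have h2 : ((2 : ℝ[X]) * ∑ i ∈ Finset.range d,
          Polynomial.C (Real.cos (((i:ℝ)+1) * θ j)) * Polynomial.Chebyshev.T ℝ ((i:ℤ)+1)).natDegree ≤ d := by
        refine le_trans (Polynomial.natDegree_mul_le) ?_
        have h20 : (2 : ℝ[X]).natDegree = 0 := Polynomial.natDegree_ofNat 2
        rw [h20, zero_add]
        refine Polynomial.natDegree_sum_le_of_forall_le _ _ (fun i hi => ?_)
        refine le_trans (Polynomial.natDegree_mul_le) ?_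
        rw [Polynomial.natDegree_C, zero_add]
        have := T_natdeg (i+1)
        rw [show ((i+1:ℕ):ℤ) = (i:ℤ)+1 by push_cast; ring] at this
        have hi' : i < d := Finset.mem_range.mp hi
        omega
      omega
    omega
  -- evaluation of L
  have evalL : ∀ x : ℝ, L.eval x = ∑ j ∈ Finset.range (d+1),
      (p.eval (c * v j) / ((d:ℝ)+1)) * (1 + 2 * ∑ i ∈ Finset.range d,
        Real.cos (((i:ℝ)+1) * θ j) * (Polynomial.Chebyshev.T ℝ ((i:ℤ)+1)).eval x) := by
    intro x
    rw [hL, Polynomial.eval_finset_sum]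
    refine Finset.sum_congr rfl fun j _ => ?_
    simp [hB, Polynomial.eval_finset_sum]
  -- evaluation at nodes
  have evalnode : ∀ l ∈ Finset.range (d+1), L.eval (v l) = p.eval (c * v l) := by
    intro l hl
    have hld : l ≤ d := by simpa using Nat.lt_succ_iff.mp (Finset.mem_range.mp hl)
    rw [evalL]
    have hterm : ∀ j ∈ Finset.range (d+1),
        (p.eval (c * v j) / ((d:ℝ)+1)) * (1 + 2 * ∑ i ∈ Finset.range d,
          Real.cos (((i:ℝ)+1) * θ j) * (Polynomial.Chebyshev.T ℝ ((i:ℤ)+1)).eval (v l))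
        = if j = l then p.eval (c * v j) else 0 := by
      intro j hj
      have hjd : j ≤ d := by simpa using Nat.lt_succ_iff.mp (Finset.mem_range.mp hj)
      have hT : ∀ i : ℕ, (Polynomial.Chebyshev.T ℝ ((i:ℤ)+1)).eval (v l)
          = Real.cos (((i:ℝ)+1) * θ l) := by
        intro i
        rw [hv]
        rw [Polynomial.Chebyshev.T_real_cos]
        norm_num
      simp only [hT]
      rw [orth d j l hjd hld]
      by_cases hjl : j = l
      · rw [if_pos hjl, if_pos hjl]
        field_simp
      · rw [if_neg hjl, if_neg hjl, mul_zero]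
    rw [Finset.sum_congr rfl hterm]
    rw [Finset.sum_ite_eq' (Finset.range (d+1)) l (fun j => p.eval (c * v j)), if_pos hl]
  -- q = p ∘ (c X)
  set q : ℝ[X] := p.comp (Polynomial.C c * Polynomial.X) with hq
  have evalq : ∀ x : ℝ, q.eval x = p.eval (c * x) := by
    intro x; rw [hq, Polynomial.eval_comp]; simp
  have hdegq : q.natDegree ≤ d := by
    rw [hq, Polynomial.natDegree_comp]
    have h1 : (Polynomial.C c * Polynomial.X).natDegree ≤ 1 := by
      refine le_trans (Polynomial.natDegree_mul_le) ?_
      simp [Polynomial.natDegree_X_le]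
    calc p.natDegree * (Polynomial.C c * Polynomial.X).natDegree
        ≤ d * 1 := Nat.mul_le_mul hdeg h1
      _ = d := by omega
  -- injectivity of nodes
  have hinj : Set.InjOn v (Finset.range (d+1)) := by
    intro j hj l hl hjl
    simp only [Finset.coe_range, Set.mem_Iio] at hj hl
    have hθj : θ j ∈ Set.Icc 0 Real.pi := by
      constructor
      · apply div_nonneg _ (le_of_lt hN)
        positivity
      · rw [hθ]
        rw [div_le_iff₀ hN]
        have : (j:ℝ) ≤ d := by exact_mod_cast Nat.lt_succ_iff.mp hj
        nlinarith [Real.pi_pos]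
    have hθl : θ l ∈ Set.Icc 0 Real.pi := by
      constructor
      · apply div_nonneg _ (le_of_lt hN)
        positivity
      · rw [hθ]
        rw [div_le_iff₀ hN]
        have : (l:ℝ) ≤ d := by exact_mod_cast Nat.lt_succ_iff.mp hl
        nlinarith [Real.pi_pos]
    have := Real.injOn_cos hθj hθl hjl
    rw [hθ] at this
    have h2 := congrArg (fun x : ℝ => x * ((d:ℝ)+1)) this
    simp only [div_mul_cancel₀ _ (ne_of_gt hN)] at h2
    have h3 := mul_left_cancel₀ Real.pi_ne_zero h2
    have hcast : (j:ℝ) = l := by linarith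
    exact_mod_cast hcast
  -- q = L
  have hqL : q = L := by
    refine Polynomial.eq_of_degrees_lt_of_eval_index_eq (v := v) (Finset.range (d+1)) hinj ?_ ?_ ?_
    · rw [Finset.card_range]
      refine lt_of_le_of_lt (Polynomial.degree_le_natDegree) ?_
      exact_mod_cast Nat.lt_succ_iff.mpr hdegq
    · rw [Finset.card_range]
      refine lt_of_le_of_lt (Polynomial.degree_le_natDegree) ?_
      exact_mod_cast Nat.lt_succ_iff.mpr hdegL
    · intro j hj
      rw [evalq, evalnode j hj]
  -- p(1) = L(y)
  have hcy : c * y = 1 := by rw [hc, hyy]; field_simp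
  have hp1 : p.eval 1 = L.eval y := by
    rw [← hqL, evalq, hcy]
  -- η ≥ 0
  have hη : 0 ≤ η := le_trans (abs_nonneg _) (h 0 (by omega))
  -- bound
  have hbnd : ∀ j ∈ Finset.range (d+1),
      |(p.eval (c * v j) / ((d:ℝ)+1)) * (1 + 2 * ∑ i ∈ Finset.range d,
        Real.cos (((i:ℝ)+1) * θ j) * (Polynomial.Chebyshev.T ℝ ((i:ℤ)+1)).eval y)|
      ≤ (η / ((d:ℝ)+1)) * (1 + 2 * (d * (2*y)^d)) := by
    intro j hj
    have hjd : j ≤ d := by simpa using Nat.lt_succ_iff.mp (Finset.mem_range.mp hj)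
    rw [abs_mul]
    have h1 : |p.eval (c * v j) / ((d:ℝ)+1)| ≤ η / ((d:ℝ)+1) := by
      rw [abs_div, abs_of_pos hN]
      gcongr
      exact h j hjd
    have h2 : |1 + 2 * ∑ i ∈ Finset.range d,
        Real.cos (((i:ℝ)+1) * θ j) * (Polynomial.Chebyshev.T ℝ ((i:ℤ)+1)).eval y|
        ≤ 1 + 2 * (d * (2*y)^d) := by
      have hterm : ∀ i ∈ Finset.range d,
          |Real.cos (((i:ℝ)+1) * θ j) * (Polynomial.Chebyshev.T ℝ ((i:ℤ)+1)).eval y|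
          ≤ (2*y)^d := by
        intro i hi
        rw [abs_mul]
        have hTpos : 0 ≤ (Polynomial.Chebyshev.T ℝ ((i:ℤ)+1)).eval y := by
          have := (T_ge_one y (le_of_lt hy1) (i+1)).1
          rw [show ((i+1:ℕ):ℤ) = (i:ℤ)+1 by push_cast; ring] at this
          linarith
        have hTle : (Polynomial.Chebyshev.T ℝ ((i:ℤ)+1)).eval y ≤ (2*y)^d := by
          have h1 := T_le_pow y (le_of_lt hy1) (i+1)
          rw [show ((i+1:ℕ):ℤ) = (i:ℤ)+1 by push_cast; ring] at h1
          refine le_trans h1 ?_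
          have hi' : i < d := Finset.mem_range.mp hi
          exact pow_le_pow_right₀ (by linarith) (by omega)
        calc |Real.cos (((i:ℝ)+1) * θ j)| * |(Polynomial.Chebyshev.T ℝ ((i:ℤ)+1)).eval y|
            ≤ 1 * |(Polynomial.Chebyshev.T ℝ ((i:ℤ)+1)).eval y| := by
              apply mul_le_mul_of_nonneg_right (Real.abs_cos_le_one _) (abs_nonneg _)
          _ = (Polynomial.Chebyshev.T ℝ ((i:ℤ)+1)).eval y := by
              rw [one_mul, abs_of_nonneg hTpos]
          _ ≤ (2*y)^d := hTle
      set S : ℝ := ∑ i ∈ Finset.range d,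
          Real.cos (((i:ℝ)+1) * θ j) * (Polynomial.Chebyshev.T ℝ ((i:ℤ)+1)).eval y with hS
      have hsum : ∑ i ∈ Finset.range d, |Real.cos (((i:ℝ)+1) * θ j)
          * (Polynomial.Chebyshev.T ℝ ((i:ℤ)+1)).eval y| ≤ (d:ℝ) * (2*y)^d := by
        calc _ ≤ ∑ _i ∈ Finset.range d, (2*y)^d := Finset.sum_le_sum hterm
          _ = (d:ℝ) * (2*y)^d := by rw [Finset.sum_const, Finset.card_range]; simp
      have habs : |S| ≤ (d:ℝ) * (2*y)^d :=
        le_trans (Finset.abs_sum_le_sum_abs _ _) hsum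
      have htr := abs_add_le (1:ℝ) (2*S)
      have h2s : |2*S| = 2*|S| := by rw [abs_mul, abs_two]
      rw [abs_one, h2s] at htr
      linarith [htr, habs]
    exact mul_le_mul h1 h2 (abs_nonneg _) (by positivity)
  have hLy : |L.eval y| ≤ η * (1 + 2 * (d * (2*y)^d)) := by
    rw [evalL]
    refine le_trans (Finset.abs_sum_le_sum_abs _ _) ?_
    refine le_trans (Finset.sum_le_sum hbnd) ?_
    rw [Finset.sum_const, Finset.card_range, nsmul_eq_mul]
    have heq : ((d:ℝ)+1) * (η/((d:ℝ)+1) * (1 + 2*((d:ℝ)*(2*y)^d)))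
        = η * (1 + 2*((d:ℝ)*(2*y)^d)) := by
      field_simp
    push_cast
    linarith [heq]
  -- final arithmetic
  have hP1 : (1:ℝ) ≤ (2*y)^d := one_le_pow₀ hy2
  have hsqrt : (1:ℝ) ≤ Real.sqrt 2 := by
    rw [show (1:ℝ) = Real.sqrt 1 by simp]
    exact Real.sqrt_le_sqrt (by norm_num)
  have hfinal : η * (1 + 2 * (d * (2*y)^d)) ≤ Real.sqrt 2 * η * ((d:ℝ)+1)^2 * (2*y)^d := by
    have hd0 : (0:ℝ) ≤ d := Nat.cast_nonneg d
    have hPnn : (0:ℝ) ≤ (2*y)^d := le_trans zero_le_one hP1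
    have t1 : 0 ≤ (Real.sqrt 2 - 1) * (η * (((d:ℝ)+1)^2 * (2*y)^d)) :=
      mul_nonneg (by linarith) (mul_nonneg hη (by positivity))
    have t2 : 0 ≤ η * ((d:ℝ)^2 * (2*y)^d) :=
      mul_nonneg hη (mul_nonneg (sq_nonneg _) hPnn)
    have t3 : 0 ≤ η * ((2*y)^d - 1) := mul_nonneg hη (by linarith)
    nlinarith [t1, t2, t3]
  have hyrw : 2 * R / r' = 2 * y := by rw [hyy]; ring
  rw [hp1, hyrw]
  exact le_trans hLy hfinal

end ChebAux
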